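/- For a, b in (0,1], the set A = (1/2 - b/4, 1/2 + a/4] is forward invariant under f = f_{a,b}: if x ∈ A then f(x) ∈ A. -/

import Mathlib

/-!
On `[0, 1/2]` the map is `x ↦ x + a x (1 - x)`, which moves points up but never above its value
`1/2 + a/4` at `1/2`; on `(1/2, 1]` it is `x ↦ x - b x (1 - x)`, which moves points down but stays
above `1/2 - b/4`. Both bounds come from `x + c x (1 - x) = 1/2 + c/4 + (x - 1/2) - c (x - 1/2)^2`.
-/

noncomputable def fab (a b x : ℝ) : ℝ :=
  if x ≤ 1/2 then x * (1 + a - a * x) else x * (1 - b + b * x)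

section

variable {a b x : ℝ}

lemma add_mul_mul_one_sub_eq (c x : ℝ) :
    x + c * x * (1 - x) = 1/2 + c/4 + (x - 1/2) - c * (x - 1/2) ^ 2 := by
  ring

lemma fab_of_le_half (hx : x ≤ 1/2) : fab a b x = x + a * x * (1 - x) := by
  rw [fab, if_pos hx]
  ring

lemma fab_of_half_lt (hx : 1/2 < x) : fab a b x = x + (-b) * x * (1 - x) := by
  rw [fab, if_neg hx.not_ge]
  ring

lemma le_fab_of_le_half (ha : 0 ≤ a) (hx₀ : 0 ≤ x) (hx : x ≤ 1/2) : x ≤ fab a b x := by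
  rw [fab_of_le_half hx]
  have : 0 ≤ a * x * (1 - x) := by
    have : 0 ≤ 1 - x := by linarith
    positivity
  linarith

lemma fab_le_of_le_half (ha : 0 ≤ a) (hx : x ≤ 1/2) : fab a b x ≤ 1/2 + a/4 := by
  rw [fab_of_le_half hx, add_mul_mul_one_sub_eq]
  linarith [mul_nonneg ha (sq_nonneg (x - 1/2))]

lemma fab_le_of_half_lt (hb : 0 ≤ b) (hx : 1/2 < x) (hx₁ : x ≤ 1) : fab a b x ≤ x := by
  rw [fab_of_half_lt hx]
  have : 0 ≤ b * x * (1 - x) := by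
    have : 0 ≤ 1 - x := by linarith
    have : 0 ≤ x := by linarith
    positivity
  linarith

lemma lt_fab_of_half_lt (hb : 0 ≤ b) (hx : 1/2 < x) : 1/2 - b/4 < fab a b x := by
  rw [fab_of_half_lt hx, add_mul_mul_one_sub_eq]
  linarith [mul_nonneg hb (sq_nonneg (x - 1/2))]

end

theorem stmt7 (a b : ℝ) (ha : a ∈ Set.Ioc (0:ℝ) 1) (hb : b ∈ Set.Ioc (0:ℝ) 1)
    (x : ℝ) (hx : x ∈ Set.Ioc (1/2 - b/4) (1/2 + a/4)) :
    fab a b x ∈ Set.Ioc (1/2 - b/4) (1/2 + a/4) := by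
  obtain ⟨ha₀, ha₁⟩ := ha
  obtain ⟨hb₀, hb₁⟩ := hb
  obtain ⟨hx_lower, hx_upper⟩ := hx
  rcases le_or_gt x (1/2) with hx_le | hx_gt
  · exact ⟨hx_lower.trans_le (le_fab_of_le_half ha₀.le (by linarith) hx_le),
      fab_le_of_le_half ha₀.le hx_le⟩
  · exact ⟨lt_fab_of_half_lt hb₀.le hx_gt,
      (fab_le_of_half_lt hb₀.le hx_gt (by linarith)).trans hx_upper⟩
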